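/- If for every K ⊆ Λ and α ∈ {0,1}^K the folded function P^{K,α}(ω) = P(α·ω)P(α·ω̄) satisfies the FKG lattice condition on {0,1}^{K^c}, then P satisfies the FKG lattice condition on {0,1}^Λ. (Uses symmetry of foldings: P^{K,α}(ω̄) = P^{K,α}(ω).) -/

import Mathlib

/-
Fix ω, ω' and let K be the set where they agree. Glued to the boundary value ω on K, the flip ω̄
becomes ω', and the all-ones and all-zeros configurations become ω ∨ ω' and ω ∧ ω'. So P(ω)P(ω')
and P(ω ∨ ω')P(ω ∧ ω') are the folding P^{K,ω} at ω and at the all-ones configuration. The lattice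
condition of the folding for the pair (ω, ω̄), whose join and meet are all-ones and all-zeros,
together with the flip symmetry of the folding gives (P(ω)P(ω'))² ≤ (P(ω ∨ ω')P(ω ∧ ω'))², and
nonnegativity of P removes the squares.
-/

variable {Λ : Type*}

/-- Concatenation `α·ω`: agrees with `α` on `K` and with `ω` on `Kᶜ`. -/
def glue (K : Finset Λ) [DecidableEq Λ] (α ω : Λ → Bool) : Λ → Bool :=
  fun i => if i ∈ K then α i else ω i

/-- Coordinatewise flip. -/
def flipC (ω : Λ → Bool) : Λ → Bool := fun i => !ω i

@[simp]
lemma flipC_flipC (ω : Λ → Bool) : flipC (flipC ω) = ω := by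
  funext i
  simp [flipC]

lemma flipC_true : flipC (fun _ : Λ => true) = fun _ => false := rfl

section Folding

variable [DecidableEq Λ]

@[simp]
lemma glue_self (K : Finset Λ) (α : Λ → Bool) : glue K α α = α := by
  funext i
  simp [glue]

/-- The folding `P^{K,α}(ω) = P(α·ω) P(α·ω̄)`. -/
def fold (P : (Λ → Bool) → ℝ) (K : Finset Λ) (α ω : Λ → Bool) : ℝ :=
  P (glue K α ω) * P (glue K α (flipC ω))

lemma fold_flipC (P : (Λ → Bool) → ℝ) (K : Finset Λ) (α ω : Λ → Bool) :
    fold P K α (flipC ω) = fold P K α ω := by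
  rw [fold, fold, flipC_flipC, mul_comm]

lemma fold_sq_le_fold_true_sq (P : (Λ → Bool) → ℝ) (K : Finset Λ) (α : Λ → Bool)
    (hfkg : ∀ ω ω' : Λ → Bool, fold P K α ω * fold P K α ω' ≤
      fold P K α (fun i => ω i || ω' i) * fold P K α (fun i => ω i && ω' i))
    (ω : Λ → Bool) :
    fold P K α ω ^ 2 ≤ fold P K α (fun _ => true) ^ 2 := by
  have h := hfkg ω (flipC ω)
  have hor : (fun i => ω i || flipC ω i) = fun _ => true := by
    funext i
    simp [flipC]
  have hand : (fun i => ω i && flipC ω i) = flipC fun _ => true := by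
    funext i
    simp [flipC]
  rw [hor, hand, fold_flipC, fold_flipC] at h
  simpa only [sq] using h

end Folding

section AgreeSet

variable [DecidableEq Λ] [Fintype Λ]

def agreeSet (ω ω' : Λ → Bool) : Finset Λ := {i | ω i = ω' i}

variable (ω ω' : Λ → Bool)

lemma glue_agreeSet_flipC : glue (agreeSet ω ω') ω (flipC ω) = ω' := by
  funext i
  cases h : ω i <;> cases h' : ω' i <;> simp [glue, agreeSet, flipC, h, h']

lemma glue_agreeSet_true : glue (agreeSet ω ω') ω (fun _ => true) = fun i => ω i || ω' i := by
  funext i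
  cases h : ω i <;> cases h' : ω' i <;> simp [glue, agreeSet, h, h']

lemma glue_agreeSet_false : glue (agreeSet ω ω') ω (fun _ => false) = fun i => ω i && ω' i := by
  funext i
  cases h : ω i <;> cases h' : ω' i <;> simp [glue, agreeSet, h, h']

end AgreeSet

/-- if every folding `P^{K,α}(ω) = P(α·ω)·P(α·ω̄)` satisfies the FKG
lattice condition, then so does `P`. -/
theorem fkg_of_foldings_fkg [DecidableEq Λ] [Fintype Λ]
    (P : (Λ → Bool) → ℝ) (h0 : ∀ ω, 0 ≤ P ω)
    (hfold : ∀ (K : Finset Λ) (α : Λ → Bool), ∀ ω ω' : Λ → Bool,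
      (P (glue K α ω) * P (glue K α (flipC ω))) *
        (P (glue K α ω') * P (glue K α (flipC ω'))) ≤
      (P (glue K α fun i => ω i || ω' i) *
          P (glue K α (flipC fun i => ω i || ω' i))) *
        (P (glue K α fun i => ω i && ω' i) *
          P (glue K α (flipC fun i => ω i && ω' i)))) :
    ∀ ω ω' : Λ → Bool,
      P ω * P ω' ≤ P (fun i => ω i || ω' i) * P (fun i => ω i && ω' i) := by
  intro ω ω'
  have key := fold_sq_le_fold_true_sq P (agreeSet ω ω') ω (hfold _ ω) ω
  rw [fold, fold, glue_self, glue_agreeSet_flipC, flipC_true, glue_agreeSet_true,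
    glue_agreeSet_false] at key
  exact (sq_le_sq₀ (mul_nonneg (h0 _) (h0 _)) (mul_nonneg (h0 _) (h0 _))).1 key
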